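/- arXiv:1712.03561 — 2 statements merged into one kernel-verified Lean document; each statement's English description precedes it below -/
import Mathlib

section
/- Let p = 2 and G = 2, with X ∈ ℝ^{n×2} whose columns each have squared Euclidean norm n, and let r_j = (1/n)⟨y, x^j⟩ for j = 1,2. Let α ∈ [0,1], λ_s, λ_d ≥ 0 with λ_d ≠ 1 + (1−α)λ_s, and let (β̂¹, β̂²) be a global minimizer of the SplitReg objective. If for some indices {i, j} = {1, 2} variable i is inactive in both models (β̂¹_i = β̂²_i = 0) and variable j is active in both models (β̂¹_j ≠ 0 and β̂²_j ≠ 0), then β̂¹_j = β̂²_j = soft(r_j, α λ_s)/(1 + (1−α)λ_s + λ_d). -/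
/-!
Where variable `i` vanishes in both models, the objective is
`C + f a + f b + λ_d |a| |b|` in the two remaining coefficients `a`, `b`, where
`f t = K t² / 2 - r t + α λ_s |t|`, `K = 1 + (1 - α) λ_s`, `r = r_j`.
Minimality in `a` alone makes `a` the minimizer of the strongly convex scalar problem
`f + λ_d |b| |·|`, so `a = soft(r, α λ_s + λ_d |b|) / K`, and symmetrically for `b`.
If both are nonzero they have the sign of `r`, and the two stationarity equations read
`K a + λ_d b = K b + λ_d a = r - sign(r) α λ_s`; as `K ≠ λ_d` this forces `a = b`, and then
`(K + λ_d) a = soft(r, α λ_s)`.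
-/

open Finset

/-- The soft-thresholding operator: `soft z γ = sign(z) * max 0 (|z| - γ)`. -/
noncomputable def soft (z γ : ℝ) : ℝ := Real.sign z * max 0 (|z| - γ)

/-- The SplitReg objective function for data `y`, design matrix `X`,
elastic net mixing parameter `α`, sparsity penalty `lam_s`, diversity penalty `lam_d`,
and coefficient matrix `β` (one column `β g` per group). -/
noncomputable def splitRegObj {n p G : ℕ} (y : Fin n → ℝ) (X : Matrix (Fin n) (Fin p) ℝ)
    (α lam_s lam_d : ℝ) (β : Fin G → Fin p → ℝ) : ℝ :=
  ∑ g : Fin G,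
    ((1 / (2 * (n : ℝ))) * ∑ i, (y i - ∑ j, X i j * β g j) ^ 2
      + lam_s * ((1 - α) / 2 * ∑ j, (β g j) ^ 2 + α * ∑ j, |β g j|)
      + lam_d / 2 * ∑ h ∈ Finset.univ.erase g, ∑ j, |β g j| * |β h j|)

theorem soft_neg (z γ : ℝ) : soft (-z) γ = -soft z γ := by
  simp only [soft, Real.sign_neg, abs_neg, neg_mul]

theorem soft_of_nonneg {z γ : ℝ} (hz : 0 ≤ z) (hγ : 0 ≤ γ) : soft z γ = max 0 (z - γ) := by
  rcases hz.lt_or_eq with hz | rfl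
  · rw [soft, Real.sign_of_pos hz, abs_of_pos hz, one_mul]
  · simp [soft, hγ]

noncomputable def lassoObj (K r γ t : ℝ) : ℝ := K / 2 * t ^ 2 - r * t + γ * |t|

theorem lassoObj_neg (K r γ t : ℝ) : lassoObj K (-r) γ (-t) = lassoObj K r γ t := by
  simp only [lassoObj, abs_neg]; ring

theorem lassoObj_add_mul_abs (K r γ δ t : ℝ) :
    lassoObj K r γ t + δ * |t| = lassoObj K r (γ + δ) t := by
  simp only [lassoObj]; ring

theorem lassoObj_soft_div_add_sq_le {K γ : ℝ} (hK : 0 < K) (hγ : 0 ≤ γ) (r t : ℝ) :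
    lassoObj K r γ (soft r γ / K) + K / 2 * (t - soft r γ / K) ^ 2 ≤ lassoObj K r γ t := by
  wlog hr : 0 ≤ r generalizing r t
  · have h := this (-r) (-t) (by linarith)
    rw [soft_neg, neg_div, lassoObj_neg, lassoObj_neg] at h
    linarith [show (-t - -(soft r γ / K)) ^ 2 = (t - soft r γ / K) ^ 2 by ring]
  rw [soft_of_nonneg hr hγ]
  rcases le_total (r - γ) 0 with h | h
  · have hrt : r * t ≤ γ * |t| := by
      calc r * t ≤ r * |t| := mul_le_mul_of_nonneg_left (le_abs_self t) hr
        _ ≤ γ * |t| := mul_le_mul_of_nonneg_right (by linarith) (abs_nonneg t)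
    simp only [max_eq_left h, zero_div, lassoObj, sub_zero, abs_zero]
    linarith
  · have habs : |(r - γ) / K| = (r - γ) / K := abs_of_nonneg (div_nonneg h hK.le)
    simp only [max_eq_right h, lassoObj, habs]
    field_simp
    nlinarith [mul_nonneg hγ (sub_nonneg.2 (le_abs_self t))]

theorem eq_soft_div_of_forall_lassoObj_le {K r γ a : ℝ} (hK : 0 < K) (hγ : 0 ≤ γ)
    (ha : ∀ t, lassoObj K r γ a ≤ lassoObj K r γ t) : a = soft r γ / K := by
  have hsq : K / 2 * (a - soft r γ / K) ^ 2 ≤ 0 := by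
    linarith [lassoObj_soft_div_add_sq_le hK hγ r a, ha (soft r γ / K)]
  have : (a - soft r γ / K) ^ 2 = 0 :=
    le_antisymm (nonpos_of_mul_nonpos_right hsq (by positivity)) (sq_nonneg _)
  exact sub_eq_zero.1 (pow_eq_zero_iff two_ne_zero |>.1 this)

theorem pos_and_mul_eq_of_eq_soft_div {K r γ a : ℝ} (hK : 0 < K) (hr : 0 ≤ r) (hγ : 0 ≤ γ)
    (ha : a = soft r γ / K) (ha0 : a ≠ 0) : 0 < a ∧ K * a = r - γ := by
  rw [soft_of_nonneg hr hγ] at ha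
  rcases le_total (r - γ) 0 with h | h
  · rw [max_eq_left h, zero_div] at ha
    exact absurd ha ha0
  · rw [max_eq_right h] at ha
    refine ⟨lt_of_le_of_ne (ha ▸ div_nonneg h hK.le) (Ne.symm ha0), ?_⟩
    rw [ha, mul_div_cancel₀ _ hK.ne']

theorem eq_soft_div_of_coupled {K d γ r a b : ℝ} (hK : 0 < K) (hd : 0 ≤ d) (hγ : 0 ≤ γ)
    (hdK : d ≠ K) (ha : a = soft r (γ + d * |b|) / K) (hb : b = soft r (γ + d * |a|) / K)
    (ha0 : a ≠ 0) (hb0 : b ≠ 0) :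
    a = soft r γ / (K + d) ∧ b = soft r γ / (K + d) := by
  wlog hr : 0 ≤ r generalizing r a b
  · have h := this (r := -r) (a := -a) (b := -b)
      (by rw [soft_neg, abs_neg, neg_div, ← ha]) (by rw [soft_neg, abs_neg, neg_div, ← hb])
      (neg_ne_zero.2 ha0) (neg_ne_zero.2 hb0) (by linarith)
    rwa [soft_neg, neg_div, neg_inj, neg_inj] at h
  obtain ⟨ha_pos, hKa⟩ := pos_and_mul_eq_of_eq_soft_div hK hr (by positivity) ha ha0
  obtain ⟨hb_pos, hKb⟩ := pos_and_mul_eq_of_eq_soft_div hK hr (by positivity) hb hb0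
  rw [abs_of_pos hb_pos] at hKa
  rw [abs_of_pos ha_pos] at hKb
  obtain rfl : a = b := by
    have : (K - d) * (a - b) = 0 := by linarith
    rcases mul_eq_zero.1 this with h | h
    · exact absurd (sub_eq_zero.1 h).symm hdK
    · linarith
  have hγr : γ ≤ r := by nlinarith
  rw [soft_of_nonneg hr hγ, max_eq_right (sub_nonneg.2 hγr), eq_div_iff (by linarith), and_self]
  linarith

def singleVarCoeffs {p : ℕ} (j : Fin p) (t u : ℝ) : Fin 2 → Fin p → ℝ :=
  fun g => Pi.single j (![t, u] g)

theorem sum_sq_sub_mul_col {n p : ℕ} (y : Fin n → ℝ) (X : Matrix (Fin n) (Fin p) ℝ)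
    {j : Fin p} (hcol : ∑ i, X i j ^ 2 = (n : ℝ)) (t : ℝ) :
    ∑ i, (y i - X i j * t) ^ 2 = ∑ i, y i ^ 2 - 2 * t * ∑ i, y i * X i j + t ^ 2 * n := by
  rw [← hcol, mul_sum, mul_sum, ← sum_sub_distrib, ← sum_add_distrib]
  exact sum_congr rfl fun i _ => by ring

theorem splitRegObj_singleVarCoeffs {n p : ℕ} (hn : 0 < n) (y : Fin n → ℝ)
    (X : Matrix (Fin n) (Fin p) ℝ) (α lam_s lam_d : ℝ) {j : Fin p}
    (hcol : ∑ i, X i j ^ 2 = (n : ℝ)) (t u : ℝ) :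
    splitRegObj y X α lam_s lam_d (singleVarCoeffs j t u)
      = (∑ i, y i ^ 2) / n
        + lassoObj (1 + (1 - α) * lam_s) ((1 / (n : ℝ)) * ∑ k, y k * X k j) (α * lam_s) t
        + lassoObj (1 + (1 - α) * lam_s) ((1 / (n : ℝ)) * ∑ k, y k * X k j) (α * lam_s) u
        + lam_d * (|t| * |u|) := by
  have hn' : (n : ℝ) ≠ 0 := Nat.cast_ne_zero.2 hn.ne'
  have he0 : univ.erase (0 : Fin 2) = {1} := by decide
  have he1 : univ.erase (1 : Fin 2) = {0} := by decide
  simp only [splitRegObj, singleVarCoeffs, Fin.sum_univ_two, he0, he1, sum_singleton,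
    Matrix.cons_val_zero, Matrix.cons_val_one, Pi.single_apply, mul_zero, apply_ite,
    ite_pow, abs_zero, zero_pow two_ne_zero, ite_mul, zero_mul, sum_ite_eq', mem_univ, if_true,
    sum_sq_sub_mul_col y X hcol, lassoObj]
  field_simp
  ring

/-- **Proposition 2, part 2 (two correlated predictors, `G = 2`).**
If one variable is inactive in both models, the other variable `j` is active in both
models, and `λ_d ≠ 1 + (1-α) λ_s`, then the coefficients of variable `j` in the two
models equal `soft(r_j, α λ_s)/(1 + (1-α) λ_s + λ_d)`. -/
theorem splitreg_two_predictors_shared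
    {n : ℕ} (hn : 0 < n) (y : Fin n → ℝ) (X : Matrix (Fin n) (Fin 2) ℝ)
    (α lam_s lam_d : ℝ) (hα : α ∈ Set.Icc (0 : ℝ) 1) (hs : 0 ≤ lam_s) (hd : 0 ≤ lam_d)
    (hcol : ∀ j : Fin 2, ∑ i, (X i j) ^ 2 = (n : ℝ))
    (hld : lam_d ≠ 1 + (1 - α) * lam_s)
    (βhat : Fin 2 → Fin 2 → ℝ)
    (hmin : ∀ b : Fin 2 → Fin 2 → ℝ,
      splitRegObj y X α lam_s lam_d βhat ≤ splitRegObj y X α lam_s lam_d b)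
    (i j : Fin 2) (hij : i ≠ j)
    (hinact : βhat 0 i = 0 ∧ βhat 1 i = 0)
    (hact : βhat 0 j ≠ 0 ∧ βhat 1 j ≠ 0) :
    βhat 0 j = soft ((1 / (n : ℝ)) * ∑ k, y k * X k j) (α * lam_s)
        / (1 + (1 - α) * lam_s + lam_d) ∧
    βhat 1 j = soft ((1 / (n : ℝ)) * ∑ k, y k * X k j) (α * lam_s)
        / (1 + (1 - α) * lam_s + lam_d) := by
  obtain ⟨hα0, hα1⟩ := hα
  have hK : 0 < 1 + (1 - α) * lam_s := by nlinarith
  have hαs : 0 ≤ α * lam_s := mul_nonneg hα0 hs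
  obtain ⟨a, b, rfl⟩ : ∃ a b : ℝ, βhat = singleVarCoeffs j a b := by
    refine ⟨βhat 0 j, βhat 1 j, funext fun g => funext fun k => ?_⟩
    obtain rfl | rfl : k = j ∨ k = i := by omega
    · fin_cases g <;> simp [singleVarCoeffs]
    · fin_cases g <;> simp [singleVarCoeffs, hij, hinact]
  simp only [singleVarCoeffs, Matrix.cons_val_zero, Matrix.cons_val_one, Pi.single_eq_same]
    at hact ⊢
  have hobj := splitRegObj_singleVarCoeffs hn y X α lam_s lam_d (hcol j)
  refine eq_soft_div_of_coupled hK hd hαs hld ?_ ?_ hact.1 hact.2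
  · refine eq_soft_div_of_forall_lassoObj_le hK (by positivity) fun t => ?_
    have h := hmin (singleVarCoeffs j t b)
    rw [hobj, hobj] at h
    rw [← lassoObj_add_mul_abs, ← lassoObj_add_mul_abs]
    linear_combination h
  · refine eq_soft_div_of_forall_lassoObj_le hK (by positivity) fun t => ?_
    have h := hmin (singleVarCoeffs j a t)
    rw [hobj, hobj] at h
    rw [← lassoObj_add_mul_abs, ← lassoObj_add_mul_abs]
    linear_combination h
end

section
/- (Deterministic version of the consistency bound.) Let y = Xβ₀ + ε with X ∈ ℝ^{n×p} whose columns x^j satisfy (1/n)Σᵢ x_{i,j}² = 1, and ε ∈ ℝⁿ an arbitrary fixed vector. Let α ∈ (0,1], λ_d ≥ 0, and suppose (1/n)·max_{1≤j≤p} |⟨ε, x^j⟩| ≤ α λ_s. Then for any global minimizer (β̂¹,…,β̂^G) of the SplitReg objective, (1/(2n))·Σ_{g=1}^G ‖Xβ̂^g − Xβ₀‖₂² ≤ G·( 2α λ_s ‖β₀‖₁ + λ_s·((1−α)/2)·‖β₀‖₂² + (λ_d (G−1)/2)·‖β₀‖₂² ), and consequently (1/(2n))·‖ X·((1/G)Σ_{g=1}^G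 β̂^g) − Xβ₀ ‖₂² ≤ 2α λ_s ‖β₀‖₁ + λ_s·((1−α)/2)·‖β₀‖₂² + (λ_d (G−1)/2)·‖β₀‖₂². -/
open Finset

/-!
Compare the minimizer with the oracle that puts `β₀` in every group. Expanding the residual
`y - Xb = ε - X(b - β₀)`, the noise condition bounds the cross term `⟨ε, X(b - β₀)⟩ / n` by
`αλ_s (‖b‖₁ + ‖β₀‖₁)`, so the `ℓ₁` penalty of `b` absorbs it; as the ridge and diversity penalties
are nonnegative, each group contributes at least `‖ε‖²/(2n) - αλ_s‖β₀‖₁ + ‖X(b - β₀)‖²/(2n)`,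
whereas the oracle's objective is explicit. The bound for the averaged model then follows from
the convexity of the square.
-/

open Matrix

lemma dotProduct_le_mul_sum_abs {ι : Type*} [Fintype ι] {u : ι → ℝ} {c : ℝ}
    (hu : ∀ j, |u j| ≤ c) (v : ι → ℝ) : u ⬝ᵥ v ≤ c * ∑ j, |v j| := by
  rw [mul_sum]
  refine sum_le_sum fun j _ => ?_
  calc u j * v j ≤ |u j| * |v j| := (le_abs_self _).trans_eq (abs_mul _ _)
    _ ≤ c * |v j| := mul_le_mul_of_nonneg_right (hu j) (abs_nonneg _)

lemma sum_sq_mean_le {ι κ : Type*} [Fintype ι] [Fintype κ] (d : κ → ι → ℝ) :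
    ∑ i, ((1 / (Fintype.card κ : ℝ)) * ∑ g, d g i) ^ 2
      ≤ (1 / (Fintype.card κ : ℝ)) * ∑ g, ∑ i, d g i ^ 2 := by
  rw [sum_comm, mul_sum]
  refine sum_le_sum fun i _ => ?_
  have := sum_div_card_sq_le_sum_sq_div_card (s := univ) (f := fun g => d g i)
  rw [card_univ] at this
  simpa only [one_div_mul_eq_div] using this

lemma sum_sq_residual_eq {m k : Type*} [Fintype m] [Fintype k] (X : Matrix m k ℝ)
    (β0 b : k → ℝ) (ε : m → ℝ) :
    ∑ i, ((X *ᵥ β0) i + ε i - (X *ᵥ b) i) ^ 2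
      = ∑ i, ε i ^ 2 - 2 * (ε ᵥ* X ⬝ᵥ (b - β0)) + ∑ i, ((X *ᵥ b) i - (X *ᵥ β0) i) ^ 2 := by
  rw [← dotProduct_mulVec, mulVec_sub, dotProduct, mul_sum, ← sum_sub_distrib,
    ← sum_add_distrib]
  refine sum_congr rfl fun i _ => ?_
  simp only [Pi.sub_apply]
  ring

lemma mulVec_mean_sub {m k κ : Type*} [Fintype k] [Fintype κ] [Nonempty κ]
    (X : Matrix m k ℝ) (β : κ → k → ℝ) (β0 : k → ℝ) (i : m) :
    ∑ j, X i j * ((1 / (Fintype.card κ : ℝ)) * ∑ g, β g j) - ∑ j, X i j * β0 j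
      = (1 / (Fintype.card κ : ℝ)) * ∑ g, ((X *ᵥ β g) i - (X *ᵥ β0) i) := by
  have hκ : (Fintype.card κ : ℝ) ≠ 0 := by positivity
  calc _ = (1 / (Fintype.card κ : ℝ)) * ∑ g, (X *ᵥ β g) i
        - (1 / (Fintype.card κ : ℝ)) * ∑ _g : κ, (X *ᵥ β0) i := by
        congr 1
        · simp only [mulVec, dotProduct, mul_sum]
          rw [sum_comm]
          exact sum_congr rfl fun g _ => sum_congr rfl fun j _ => by ring
        · rw [sum_const, card_univ, nsmul_eq_mul, ← mul_assoc, one_div_mul_cancel hκ, one_mul]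
          rfl
    _ = _ := by rw [← mul_sub, ← sum_sub_distrib]

lemma sum_sq_mulVec_mean_sub_le {m k κ : Type*} [Fintype m] [Fintype k] [Fintype κ]
    [Nonempty κ] (X : Matrix m k ℝ) (β : κ → k → ℝ) (β0 : k → ℝ) :
    ∑ i, (∑ j, X i j * ((1 / (Fintype.card κ : ℝ)) * ∑ g, β g j) - ∑ j, X i j * β0 j) ^ 2
      ≤ (1 / (Fintype.card κ : ℝ)) * ∑ g, ∑ i, ((X *ᵥ β g) i - (X *ᵥ β0) i) ^ 2 := by
  simp only [mulVec_mean_sub]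
  exact sum_sq_mean_le fun g i => (X *ᵥ β g) i - (X *ᵥ β0) i

section Objective

variable {n p G : ℕ} (X : Matrix (Fin n) (Fin p) ℝ) (β0 : Fin p → ℝ) (ε : Fin n → ℝ)
  {α lam_s lam_d : ℝ}

lemma splitReg_basic_inequality (hα₀ : 0 ≤ α) (hα₁ : α ≤ 1) (hlam : 0 ≤ lam_s)
    (hnoise : ∀ j, (1 / (n : ℝ)) * |(ε ᵥ* X) j| ≤ α * lam_s) (b : Fin p → ℝ) :
    (1 / (2 * (n : ℝ))) * ∑ i, ε i ^ 2 - α * lam_s * ∑ j, |β0 j|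
        + (1 / (2 * (n : ℝ))) * ∑ i, ((X *ᵥ b) i - (X *ᵥ β0) i) ^ 2
      ≤ (1 / (2 * (n : ℝ))) * ∑ i, ((X *ᵥ β0) i + ε i - (X *ᵥ b) i) ^ 2
        + lam_s * ((1 - α) / 2 * ∑ j, b j ^ 2 + α * ∑ j, |b j|) := by
  have hcross : (1 / (n : ℝ)) * (ε ᵥ* X ⬝ᵥ (b - β0))
      ≤ α * lam_s * (∑ j, |b j| + ∑ j, |β0 j|) :=
    calc (1 / (n : ℝ)) * (ε ᵥ* X ⬝ᵥ (b - β0)) = (1 / (n : ℝ)) • (ε ᵥ* X) ⬝ᵥ (b - β0) := by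
          rw [smul_dotProduct, smul_eq_mul]
      _ ≤ α * lam_s * ∑ j, |b j - β0 j| :=
          dotProduct_le_mul_sum_abs (fun j => by simpa [abs_mul] using hnoise j) _
      _ ≤ α * lam_s * (∑ j, |b j| + ∑ j, |β0 j|) := by
          rw [← sum_add_distrib]
          exact mul_le_mul_of_nonneg_left (sum_le_sum fun j _ => abs_sub _ _) (by positivity)
  have hridge : 0 ≤ lam_s * ((1 - α) / 2 * ∑ j, b j ^ 2) :=
    mul_nonneg hlam (mul_nonneg (by linarith) (by positivity))
  rw [sum_sq_residual_eq]
  linear_combination hcross + hridge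

lemma splitRegObj_const (hG : 0 < G) (y : Fin n → ℝ) (b : Fin p → ℝ) :
    splitRegObj y X α lam_s lam_d (fun _ : Fin G => b)
      = G * ((1 / (2 * (n : ℝ))) * ∑ i, (y i - (X *ᵥ b) i) ^ 2
          + lam_s * ((1 - α) / 2 * ∑ j, b j ^ 2 + α * ∑ j, |b j|)
          + lam_d / 2 * ((G - 1) * ∑ j, b j ^ 2)) := by
  simp only [splitRegObj, ← sq, sq_abs, sum_const, card_erase_of_mem (mem_univ _),
    card_univ, Fintype.card_fin, nsmul_eq_mul, Nat.cast_sub hG, Nat.cast_one]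
  rfl

lemma le_splitRegObj (hα₀ : 0 ≤ α) (hα₁ : α ≤ 1) (hlam : 0 ≤ lam_s) (hd : 0 ≤ lam_d)
    (hnoise : ∀ j, (1 / (n : ℝ)) * |(ε ᵥ* X) j| ≤ α * lam_s) (β : Fin G → Fin p → ℝ) :
    G * ((1 / (2 * (n : ℝ))) * ∑ i, ε i ^ 2 - α * lam_s * ∑ j, |β0 j|)
        + (1 / (2 * (n : ℝ))) * ∑ g, ∑ i, ((X *ᵥ β g) i - (X *ᵥ β0) i) ^ 2
      ≤ splitRegObj (fun i => (X *ᵥ β0) i + ε i) X α lam_s lam_d β := by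
  calc _ = ∑ g : Fin G, ((1 / (2 * (n : ℝ))) * ∑ i, ε i ^ 2 - α * lam_s * ∑ j, |β0 j|
        + (1 / (2 * (n : ℝ))) * ∑ i, ((X *ᵥ β g) i - (X *ᵥ β0) i) ^ 2) := by
        rw [sum_add_distrib, sum_const, card_univ, Fintype.card_fin, nsmul_eq_mul, ← mul_sum]
    _ ≤ _ := sum_le_sum fun g _ => by
        have hdiversity : 0 ≤ lam_d / 2 * ∑ h ∈ univ.erase g, ∑ j, |β g j| * |β h j| := by
          positivity
        exact (splitReg_basic_inequality X β0 ε hα₀ hα₁ hlam hnoise (β g)).trans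
          (le_add_of_nonneg_right hdiversity)

lemma splitReg_sum_sq_prediction_error_le (hG : 0 < G) (hα₀ : 0 ≤ α) (hα₁ : α ≤ 1)
    (hlam : 0 ≤ lam_s) (hd : 0 ≤ lam_d)
    (hnoise : ∀ j, (1 / (n : ℝ)) * |(ε ᵥ* X) j| ≤ α * lam_s) (βhat : Fin G → Fin p → ℝ)
    (hmin : splitRegObj (fun i => (X *ᵥ β0) i + ε i) X α lam_s lam_d βhat
      ≤ splitRegObj (fun i => (X *ᵥ β0) i + ε i) X α lam_s lam_d (fun _ : Fin G => β0)) :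
    (1 / (2 * (n : ℝ))) * ∑ g, ∑ i, ((X *ᵥ βhat g) i - (X *ᵥ β0) i) ^ 2
      ≤ G * (2 * α * lam_s * ∑ j, |β0 j| + lam_s * ((1 - α) / 2) * ∑ j, β0 j ^ 2
          + lam_d * (G - 1) / 2 * ∑ j, β0 j ^ 2) := by
  have hlow := le_splitRegObj X β0 ε hα₀ hα₁ hlam hd hnoise βhat
  rw [splitRegObj_const X hG] at hmin
  simp only [add_sub_cancel_left] at hmin
  linear_combination hlow + hmin

end Objective

theorem splitreg_deterministic_bound_general
    {n p G : ℕ} (hG : 0 < G)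
    (X : Matrix (Fin n) (Fin p) ℝ) (β0 : Fin p → ℝ) (ε : Fin n → ℝ)
    (α lam_s lam_d : ℝ) (hα₁ : 0 < α) (hα₂ : α ≤ 1) (hd : 0 ≤ lam_d)
    (hnoise : ∀ j : Fin p, (1 / (n : ℝ)) * |∑ i, ε i * X i j| ≤ α * lam_s)
    (βhat : Fin G → Fin p → ℝ)
    (hmin : ∀ b : Fin G → Fin p → ℝ,
      splitRegObj (fun i => ∑ j, X i j * β0 j + ε i) X α lam_s lam_d βhat
        ≤ splitRegObj (fun i => ∑ j, X i j * β0 j + ε i) X α lam_s lam_d b) :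
    (1 / (2 * (n : ℝ))) *
        ∑ g, ∑ i, ((∑ j, X i j * βhat g j) - ∑ j, X i j * β0 j) ^ 2
      ≤ (G : ℝ) * (2 * α * lam_s * (∑ j, |β0 j|)
          + lam_s * ((1 - α) / 2) * (∑ j, (β0 j) ^ 2)
          + lam_d * ((G : ℝ) - 1) / 2 * (∑ j, (β0 j) ^ 2)) ∧
    (1 / (2 * (n : ℝ))) *
        ∑ i, ((∑ j, X i j * ((1 / (G : ℝ)) * ∑ g, βhat g j)) - ∑ j, X i j * β0 j) ^ 2
      ≤ 2 * α * lam_s * (∑ j, |β0 j|)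
          + lam_s * ((1 - α) / 2) * (∑ j, (β0 j) ^ 2)
          + lam_d * ((G : ℝ) - 1) / 2 * (∑ j, (β0 j) ^ 2) := by
  obtain hp | hp := isEmpty_or_nonempty (Fin p)
  · simp
  obtain ⟨j₀⟩ := hp
  have hlam : 0 ≤ lam_s :=
    nonneg_of_mul_nonneg_right ((by positivity : (0 : ℝ) ≤ _).trans (hnoise j₀)) hα₁
  have hsum := splitReg_sum_sq_prediction_error_le X β0 ε hG hα₁.le hα₂ hlam hd hnoise βhat
    (hmin _)
  refine ⟨hsum, ?_⟩
  have : Nonempty (Fin G) := Fin.pos_iff_nonempty.mp hG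
  have hmean := sum_sq_mulVec_mean_sub_le X βhat β0
  rw [Fintype.card_fin] at hmean
  calc _ ≤ (1 / (2 * (n : ℝ))) *
        ((1 / (G : ℝ)) * ∑ g, ∑ i, ((X *ᵥ βhat g) i - (X *ᵥ β0) i) ^ 2) := by gcongr
    _ = (1 / (G : ℝ)) *
        ((1 / (2 * (n : ℝ))) * ∑ g, ∑ i, ((X *ᵥ βhat g) i - (X *ᵥ β0) i) ^ 2) := by ring
    _ ≤ (1 / (G : ℝ)) * (G * (2 * α * lam_s * ∑ j, |β0 j| + lam_s * ((1 - α) / 2) * ∑ j, β0 j ^ 2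
          + lam_d * (G - 1) / 2 * ∑ j, β0 j ^ 2)) := by gcongr
    _ = _ := by field_simp

/-- **Deterministic version of the consistency bound (Theorem 1).**
If `y = Xβ₀ + ε` with normalized columns and `(1/n) maxⱼ |⟨ε, x^j⟩| ≤ αλ_s`, then any
global minimizer of the SplitReg objective satisfies both the summed prediction error
bound and the bound for the averaged model. -/
theorem splitreg_deterministic_bound
    {n p G : ℕ} (hn : 0 < n) (hG : 0 < G)
    (X : Matrix (Fin n) (Fin p) ℝ) (β0 : Fin p → ℝ) (ε : Fin n → ℝ)
    (hcol : ∀ j : Fin p, (1 / (n : ℝ)) * ∑ i, (X i j) ^ 2 = 1)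
    (α lam_s lam_d : ℝ) (hα₁ : 0 < α) (hα₂ : α ≤ 1) (hd : 0 ≤ lam_d)
    (hnoise : ∀ j : Fin p, (1 / (n : ℝ)) * |∑ i, ε i * X i j| ≤ α * lam_s)
    (βhat : Fin G → Fin p → ℝ)
    (hmin : ∀ b : Fin G → Fin p → ℝ,
      splitRegObj (fun i => ∑ j, X i j * β0 j + ε i) X α lam_s lam_d βhat
        ≤ splitRegObj (fun i => ∑ j, X i j * β0 j + ε i) X α lam_s lam_d b) :
    (1 / (2 * (n : ℝ))) *
        ∑ g, ∑ i, ((∑ j, X i j * βhat g j) - ∑ j, X i j * β0 j) ^ 2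
      ≤ (G : ℝ) * (2 * α * lam_s * (∑ j, |β0 j|)
          + lam_s * ((1 - α) / 2) * (∑ j, (β0 j) ^ 2)
          + lam_d * ((G : ℝ) - 1) / 2 * (∑ j, (β0 j) ^ 2)) ∧
    (1 / (2 * (n : ℝ))) *
        ∑ i, ((∑ j, X i j * ((1 / (G : ℝ)) * ∑ g, βhat g j)) - ∑ j, X i j * β0 j) ^ 2
      ≤ 2 * α * lam_s * (∑ j, |β0 j|)
          + lam_s * ((1 - α) / 2) * (∑ j, (β0 j) ^ 2)
          + lam_d * ((G : ℝ) - 1) / 2 * (∑ j, (β0 j) ^ 2) :=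
  splitreg_deterministic_bound_general hG X β0 ε α lam_s lam_d hα₁ hα₂ hd hnoise βhat hmin
end
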